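/- Let A be an n×n symmetric positive semidefinite matrix with a partial Cholesky factorization Πᵀ A Π = L Lᵀ + [[0,0],[0,S]] where L ∈ ℝ^{n×k} has its first k rows lower triangular and S is the (n−k)×(n−k) Schur complement. Then the approximation error satisfies ‖Πᵀ A Π − L Lᵀ‖₂ = ‖S‖₂ ≥ λ_{k+1}(A), where λ_{k+1}(A) is the (k+1)-st largest eigenvalue of A. -/

import Mathlib

open Matrix

/-- The `j`-th largest eigenvalue (0-based index `j`) of a Hermitian matrix. -/
noncomputable def eigDesc {n : ℕ} {A : Matrix (Fin n) (Fin n) ℝ} (hA : A.IsHermitian)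
    (j : Fin n) : ℝ :=
  (hA.eigenvalues ∘ Tuple.sort hA.eigenvalues) j.rev

/-- The spectral norm (largest singular value) of a real matrix. -/
noncomputable def specNorm {m n : ℕ} (X : Matrix (Fin m) (Fin n) ℝ) : ℝ :=
  Real.sqrt (⨆ j, (Matrix.isHermitian_conjTranspose_mul_self X).eigenvalues j)

/-- The `j`-th largest singular value (0-based index `j`) of a real matrix. -/
noncomputable def sval {m k : ℕ} (X : Matrix (Fin m) (Fin k) ℝ) (j : Fin k) : ℝ :=
  Real.sqrt (eigDesc (Matrix.isHermitian_conjTranspose_mul_self X) j)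

/-
`Πᵀ A Π - L Lᵀ` is the block embedding `E` of `S`, which acts on a vector only through its last
`m` coordinates, so `‖E‖₂ = ‖S‖₂`. For the eigenvalue bound, `Πᵀ A Π` has the characteristic
polynomial, hence the eigenvalues, of `A`; on `ker Lᵀ`, of dimension at least `m`, its quadratic
form is that of `E`, hence at most `‖S‖₂ ‖x‖²`. This forces `λ_{k+1} ≤ ‖S‖₂` (Courant–Fischer):
such a subspace meets the span of the top `k + 1` eigenvectors, where the form is at least
`λ_{k+1} ‖x‖²`, nontrivially.
-/

namespace Matrix

variable {n : Type*} [Fintype n]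

theorem _root_.OrthonormalBasis.dotProduct_eq_sum (b : OrthonormalBasis n ℝ (EuclideanSpace ℝ n))
    (x y : n → ℝ) : x ⬝ᵥ y = ∑ i, (b i ⬝ᵥ x) * (b i ⬝ᵥ y) := by
  have h := b.sum_inner_mul_inner (WithLp.toLp 2 x) (WithLp.toLp 2 y)
  simp only [EuclideanSpace.inner_eq_star_dotProduct, star_trivial] at h
  simp_rw [dotProduct_comm x, ← h, dotProduct_comm y]

theorem _root_.OrthonormalBasis.dotProduct_eq_ite [DecidableEq n]
    (b : OrthonormalBasis n ℝ (EuclideanSpace ℝ n)) (i j : n) :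
    b i ⬝ᵥ b j = if i = j then 1 else 0 := by
  rw [← orthonormal_iff_ite.mp b.orthonormal i j, EuclideanSpace.inner_eq_star_dotProduct,
    star_trivial, dotProduct_comm]

theorem _root_.OrthonormalBasis.linearIndependent_ofLp
    (b : OrthonormalBasis n ℝ (EuclideanSpace ℝ n)) :
    LinearIndependent ℝ fun i => (b i : n → ℝ) :=
  b.orthonormal.linearIndependent.map' (WithLp.linearEquiv 2 ℝ (n → ℝ)).toLinearMap
    (WithLp.linearEquiv 2 ℝ (n → ℝ)).ker

section OrderedRing

variable {R : Type*} [CommRing R] [LinearOrder R] [IsStrictOrderedRing R]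

theorem dotProduct_self_nonneg (x : n → R) : 0 ≤ x ⬝ᵥ x :=
  Finset.sum_nonneg fun i _ => mul_self_nonneg (x i)

theorem dotProduct_self_pos {x : n → R} (hx : x ≠ 0) : 0 < x ⬝ᵥ x :=
  (dotProduct_self_nonneg x).lt_of_ne' (mt dotProduct_self_eq_zero.mp hx)

theorem dotProduct_sq_le_dotProduct_self_mul (x y : n → R) :
    (x ⬝ᵥ y) ^ 2 ≤ (x ⬝ᵥ x) * (y ⬝ᵥ y) := by
  simpa only [dotProduct, sq] using Finset.sum_mul_sq_le_sq_mul_sq Finset.univ x y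

end OrderedRing

theorem card_le_finrank_ker_mulVecLin_add_card {r K : Type*} [Fintype r] [Field K]
    (M : Matrix r n K) :
    Fintype.card n ≤ Module.finrank K (LinearMap.ker M.mulVecLin) + Fintype.card r := by
  have hsum := LinearMap.finrank_range_add_finrank_ker M.mulVecLin
  have hle := Submodule.finrank_le (LinearMap.range M.mulVecLin)
  rw [Module.finrank_fintype_fun_eq_card] at hsum hle
  omega

theorem charpoly_mul_mul_of_mul_eq_one {R : Type*} [CommRing R] [DecidableEq n]
    {P Q : Matrix n n R} (h : P * Q = 1) (A : Matrix n n R) :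
    (Q * A * P).charpoly = A.charpoly := by
  rw [charpoly_mul_comm, ← Matrix.mul_assoc, h, Matrix.one_mul]

section Spectral

variable [DecidableEq n] {A : Matrix n n ℝ} (hA : A.IsHermitian)

theorem IsHermitian.eigenvectorBasis_dotProduct_mulVec (i : n) (x : n → ℝ) :
    hA.eigenvectorBasis i ⬝ᵥ A *ᵥ x = hA.eigenvalues i * (hA.eigenvectorBasis i ⬝ᵥ x) := by
  have hAt : Aᵀ = A := by simpa only [conjTranspose_eq_transpose_of_trivial] using hA.eq
  rw [dotProduct_mulVec, ← mulVec_transpose, hAt, hA.mulVec_eigenvectorBasis, smul_dotProduct,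
    smul_eq_mul]

theorem IsHermitian.dotProduct_mulVec_eq_sum (x : n → ℝ) :
    x ⬝ᵥ A *ᵥ x = ∑ i, hA.eigenvalues i * (hA.eigenvectorBasis i ⬝ᵥ x) ^ 2 := by
  rw [hA.eigenvectorBasis.dotProduct_eq_sum]
  refine Finset.sum_congr rfl fun i _ => ?_
  rw [hA.eigenvectorBasis_dotProduct_mulVec]
  ring

theorem IsHermitian.dotProduct_mulVec_le_iSup_mul (x : n → ℝ) :
    x ⬝ᵥ A *ᵥ x ≤ (⨆ i, hA.eigenvalues i) * (x ⬝ᵥ x) := by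
  rw [hA.dotProduct_mulVec_eq_sum, hA.eigenvectorBasis.dotProduct_eq_sum, Finset.mul_sum]
  refine Finset.sum_le_sum fun i _ => ?_
  rw [← sq]
  exact mul_le_mul_of_nonneg_right (le_ciSup (Finite.bddAbove_range _) i) (sq_nonneg _)

theorem IsHermitian.iSup_eigenvalues_le_iff [Nonempty n] {c : ℝ} :
    (⨆ i, hA.eigenvalues i) ≤ c ↔ ∀ x, x ⬝ᵥ A *ᵥ x ≤ c * (x ⬝ᵥ x) := by
  refine ⟨fun h x => (hA.dotProduct_mulVec_le_iSup_mul x).trans ?_, fun h => ciSup_le fun i => ?_⟩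
  · exact mul_le_mul_of_nonneg_right h (dotProduct_self_nonneg x)
  · simpa [hA.eigenvectorBasis_dotProduct_mulVec, hA.eigenvectorBasis.dotProduct_eq_ite]
      using h (hA.eigenvectorBasis i)

theorem IsHermitian.mul_dotProduct_self_le_of_mem_span {s : Set n} {μ : ℝ}
    (hs : ∀ i ∈ s, μ ≤ hA.eigenvalues i) {x : n → ℝ}
    (hx : x ∈ Submodule.span ℝ ((fun i => (hA.eigenvectorBasis i : n → ℝ)) '' s)) :
    μ * (x ⬝ᵥ x) ≤ x ⬝ᵥ A *ᵥ x := by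
  have hcoord : ∀ j ∉ s, hA.eigenvectorBasis j ⬝ᵥ x = 0 := by
    intro j hj
    induction hx using Submodule.span_induction with
    | mem y hy =>
      obtain ⟨i, hi, rfl⟩ := hy
      rw [hA.eigenvectorBasis.dotProduct_eq_ite, if_neg (ne_of_mem_of_not_mem hi hj).symm]
    | zero => exact dotProduct_zero _
    | add y z _ _ hy hz => rw [dotProduct_add, hy, hz, add_zero]
    | smul a y _ hy => rw [dotProduct_smul, hy, smul_zero]
  rw [hA.dotProduct_mulVec_eq_sum, hA.eigenvectorBasis.dotProduct_eq_sum, Finset.mul_sum]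
  refine Finset.sum_le_sum fun i _ => ?_
  rw [← sq]
  by_cases hi : i ∈ s
  · exact mul_le_mul_of_nonneg_right (hs i hi) (sq_nonneg _)
  · simp [hcoord i hi]

theorem IsHermitian.le_of_forall_mem_submodule (s : Finset n) {μ c : ℝ}
    (hs : ∀ i ∈ s, μ ≤ hA.eigenvalues i) (V : Submodule ℝ (n → ℝ))
    (hV : Fintype.card n < Module.finrank ℝ V + s.card)
    (hc : ∀ x ∈ V, x ⬝ᵥ A *ᵥ x ≤ c * (x ⬝ᵥ x)) : μ ≤ c := by
  set W : Submodule ℝ (n → ℝ) :=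
    Submodule.span ℝ ((fun i => (hA.eigenvectorBasis i : n → ℝ)) '' s) with hWdef
  have hW : Module.finrank ℝ W = s.card := by
    rw [hWdef, Set.image_eq_range]
    exact (finrank_span_eq_card
      (hA.eigenvectorBasis.linearIndependent_ofLp.comp _ Subtype.val_injective)).trans
      (Fintype.card_coe s)
  have hVW : V ⊓ W ≠ ⊥ := by
    intro h
    have hsum := Submodule.finrank_sup_add_finrank_inf_eq V W
    have hle := Submodule.finrank_le (V ⊔ W)
    rw [h, finrank_bot, hW] at hsum
    rw [Module.finrank_fintype_fun_eq_card] at hle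
    omega
  obtain ⟨x, ⟨hxV, hxW⟩, hx0⟩ := Submodule.exists_mem_ne_zero_of_ne_bot hVW
  exact le_of_mul_le_mul_right ((hA.mul_dotProduct_self_le_of_mem_span hs hxW).trans (hc x hxV))
    (dotProduct_self_pos hx0)

end Spectral

section Blocks

variable {l m p R : Type*} [Fintype l] [Fintype m] [Fintype p] (e : l ⊕ m ≃ p)

theorem reindex_fromBlocks_zero_mulVec [NonUnitalNonAssocSemiring R] (S : Matrix m m R)
    (x : p → R) :
    reindex e e (fromBlocks (0 : Matrix l l R) 0 0 S) *ᵥ x =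
      Sum.elim (0 : l → R) (S *ᵥ (x ∘ e ∘ Sum.inr)) ∘ e.symm := by
  rw [reindex_apply, submatrix_mulVec_equiv, Equiv.symm_symm, fromBlocks_mulVec]
  simp [Function.comp_assoc]

theorem dotProduct_sumElim_zero_comp_symm [NonUnitalNonAssocSemiring R] (x : p → R) (w : m → R) :
    x ⬝ᵥ Sum.elim (0 : l → R) w ∘ e.symm = (x ∘ e ∘ Sum.inr) ⬝ᵥ w := by
  rw [dotProduct_comp_equiv_symm, ← Sum.elim_comp_inl_inr (x ∘ e), sumElim_dotProduct_sumElim,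
    dotProduct_zero, zero_add, Function.comp_assoc]

theorem sumElim_zero_comp_symm_dotProduct_self [NonUnitalNonAssocSemiring R] (w : m → R) :
    (Sum.elim (0 : l → R) w ∘ e.symm) ⬝ᵥ (Sum.elim (0 : l → R) w ∘ e.symm) = w ⬝ᵥ w := by
  rw [comp_equiv_dotProduct_comp_equiv, sumElim_dotProduct_sumElim, zero_dotProduct, zero_add]

theorem comp_inr_dotProduct_self_le [CommRing R] [LinearOrder R] [IsStrictOrderedRing R]
    (x : p → R) : (x ∘ e ∘ Sum.inr) ⬝ᵥ (x ∘ e ∘ Sum.inr) ≤ x ⬝ᵥ x := by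
  conv_rhs => rw [← comp_equiv_dotProduct_comp_equiv x x e, ← Sum.elim_comp_inl_inr (x ∘ e),
    sumElim_dotProduct_sumElim]
  exact le_add_of_nonneg_left (dotProduct_self_nonneg _)

end Blocks

end Matrix

theorem eigDesc_eq_of_charpoly_eq {N : ℕ} {A B : Matrix (Fin N) (Fin N) ℝ} (hA : A.IsHermitian)
    (hB : B.IsHermitian) (h : A.charpoly = B.charpoly) (j : Fin N) :
    eigDesc hA j = eigDesc hB j := by
  simp only [eigDesc, (hA.eigenvalues_eq_eigenvalues_iff hB).mpr h]

theorem eigDesc_le_of_forall_mem_submodule {N : ℕ} {A : Matrix (Fin N) (Fin N) ℝ}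
    (hA : A.IsHermitian) (j : Fin N) {c : ℝ} (V : Submodule ℝ (Fin N → ℝ))
    (hV : N ≤ Module.finrank ℝ V + j) (hc : ∀ x ∈ V, x ⬝ᵥ A *ᵥ x ≤ c * (x ⬝ᵥ x)) :
    eigDesc hA j ≤ c := by
  set t := Tuple.sort hA.eigenvalues
  refine hA.le_of_forall_mem_submodule ((Finset.Ici j.rev).map t.toEmbedding) ?_ V ?_ hc
  · simp only [Finset.mem_map_equiv, Finset.mem_Ici]
    intro i hi
    have := Tuple.monotone_sort hA.eigenvalues hi
    rwa [Function.comp_apply, Function.comp_apply, Equiv.apply_symm_apply] at this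
  · rw [Finset.card_map, Fin.card_Ici, Fintype.card_fin, Fin.val_rev]
    omega

section SpecNorm

variable {m n : ℕ}

theorem specNorm_nonneg (X : Matrix (Fin m) (Fin n) ℝ) : 0 ≤ specNorm X :=
  Real.sqrt_nonneg _

theorem specNorm_sq (X : Matrix (Fin m) (Fin n) ℝ) :
    specNorm X ^ 2 = ⨆ j, (isHermitian_conjTranspose_mul_self X).eigenvalues j :=
  Real.sq_sqrt (Real.iSup_nonneg (eigenvalues_conjTranspose_mul_self_nonneg X))

theorem dotProduct_mulVec_conjTranspose_mul_self (X : Matrix (Fin m) (Fin n) ℝ) (x : Fin n → ℝ) :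
    x ⬝ᵥ (Xᴴ * X) *ᵥ x = X *ᵥ x ⬝ᵥ X *ᵥ x := by
  rw [← mulVec_mulVec, conjTranspose_eq_transpose_of_trivial, dotProduct_mulVec,
    vecMul_transpose]

theorem mulVec_dotProduct_mulVec_le_specNorm_sq (X : Matrix (Fin m) (Fin n) ℝ) (x : Fin n → ℝ) :
    X *ᵥ x ⬝ᵥ X *ᵥ x ≤ specNorm X ^ 2 * (x ⬝ᵥ x) := by
  rw [specNorm_sq, ← dotProduct_mulVec_conjTranspose_mul_self]
  exact (isHermitian_conjTranspose_mul_self X).dotProduct_mulVec_le_iSup_mul x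

theorem specNorm_le_iff [Nonempty (Fin n)] (X : Matrix (Fin m) (Fin n) ℝ) {c : ℝ} (hc : 0 ≤ c) :
    specNorm X ≤ c ↔ ∀ x, X *ᵥ x ⬝ᵥ X *ᵥ x ≤ c ^ 2 * (x ⬝ᵥ x) := by
  rw [← pow_le_pow_iff_left₀ (specNorm_nonneg X) hc two_ne_zero, specNorm_sq,
    (isHermitian_conjTranspose_mul_self X).iSup_eigenvalues_le_iff]
  simp only [dotProduct_mulVec_conjTranspose_mul_self]

theorem dotProduct_mulVec_le_specNorm_mul (M : Matrix (Fin n) (Fin n) ℝ) (x : Fin n → ℝ) :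
    x ⬝ᵥ M *ᵥ x ≤ specNorm M * (x ⬝ᵥ x) := by
  have hsq : (x ⬝ᵥ M *ᵥ x) ^ 2 ≤ (specNorm M * (x ⬝ᵥ x)) ^ 2 :=
    calc (x ⬝ᵥ M *ᵥ x) ^ 2 ≤ (x ⬝ᵥ x) * (M *ᵥ x ⬝ᵥ M *ᵥ x) :=
          dotProduct_sq_le_dotProduct_self_mul _ _
      _ ≤ (x ⬝ᵥ x) * (specNorm M ^ 2 * (x ⬝ᵥ x)) :=
        mul_le_mul_of_nonneg_left (mulVec_dotProduct_mulVec_le_specNorm_sq M x)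
          (dotProduct_self_nonneg x)
      _ = (specNorm M * (x ⬝ᵥ x)) ^ 2 := by ring
  exact (le_abs_self _).trans (abs_le_of_sq_le_sq hsq
    (mul_nonneg (specNorm_nonneg M) (dotProduct_self_nonneg x)))

theorem specNorm_reindex_fromBlocks_zero {l : Type*} [Fintype l] [Nonempty (Fin m)]
    (e : l ⊕ Fin m ≃ Fin n) (S : Matrix (Fin m) (Fin m) ℝ) :
    specNorm (reindex e e (fromBlocks (0 : Matrix l l ℝ) 0 0 S)) = specNorm S := by
  have : Nonempty (Fin n) := ⟨e (Sum.inr (Classical.arbitrary _))⟩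
  apply le_antisymm
  · rw [specNorm_le_iff _ (specNorm_nonneg S)]
    intro x
    rw [reindex_fromBlocks_zero_mulVec, sumElim_zero_comp_symm_dotProduct_self]
    exact (mulVec_dotProduct_mulVec_le_specNorm_sq S _).trans
      (mul_le_mul_of_nonneg_left (comp_inr_dotProduct_self_le e x) (sq_nonneg _))
  · rw [specNorm_le_iff _ (specNorm_nonneg _)]
    intro z
    have h := mulVec_dotProduct_mulVec_le_specNorm_sq
      (reindex e e (fromBlocks (0 : Matrix l l ℝ) 0 0 S)) (Sum.elim (0 : l → ℝ) z ∘ e.symm)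
    have hz : (Sum.elim (0 : l → ℝ) z ∘ e.symm) ∘ e ∘ Sum.inr = z := by
      ext; simp
    rwa [reindex_fromBlocks_zero_mulVec, hz, sumElim_zero_comp_symm_dotProduct_self,
      sumElim_zero_comp_symm_dotProduct_self] at h

end SpecNorm

theorem eigDesc_le_specNorm_of_eq_mul_transpose_add {k m : ℕ} (hm : 0 < m)
    {B : Matrix (Fin (k + m)) (Fin (k + m)) ℝ} (hB : B.IsHermitian)
    (L : Matrix (Fin (k + m)) (Fin k) ℝ) (S : Matrix (Fin m) (Fin m) ℝ)
    (h : B = L * Lᵀ + reindex finSumFinEquiv finSumFinEquiv (fromBlocks 0 0 0 S)) :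
    eigDesc hB ⟨k, Nat.lt_add_of_pos_right hm⟩ ≤ specNorm S := by
  refine eigDesc_le_of_forall_mem_submodule hB _ (LinearMap.ker Lᵀ.mulVecLin) ?_ fun x hx => ?_
  · simpa using card_le_finrank_ker_mulVecLin_add_card Lᵀ
  · have hLx : Lᵀ *ᵥ x = 0 := hx
    set x₂ := x ∘ finSumFinEquiv ∘ Sum.inr
    calc x ⬝ᵥ B *ᵥ x = x₂ ⬝ᵥ S *ᵥ x₂ := by
          rw [h, add_mulVec, ← mulVec_mulVec, hLx, mulVec_zero, zero_add,
            reindex_fromBlocks_zero_mulVec, dotProduct_sumElim_zero_comp_symm]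
      _ ≤ specNorm S * (x₂ ⬝ᵥ x₂) := dotProduct_mulVec_le_specNorm_mul S x₂
      _ ≤ specNorm S * (x ⬝ᵥ x) :=
          mul_le_mul_of_nonneg_left (comp_inr_dotProduct_self_le _ x) (specNorm_nonneg S)

/-- For a partial Cholesky factorization `Πᵀ A Π = L Lᵀ + [[0,0],[0,S]]` of a
symmetric positive semidefinite `A`, the approximation error satisfies
`‖Πᵀ A Π − L Lᵀ‖₂ = ‖S‖₂ ≥ λ_{k+1}(A)`. -/
theorem partial_cholesky_error_eq_schur_norm_ge_eig {k m : ℕ} (hm : 0 < m)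
    (A : Matrix (Fin (k + m)) (Fin (k + m)) ℝ) (hA : A.PosSemidef)
    (σ : Equiv.Perm (Fin (k + m)))
    (L : Matrix (Fin (k + m)) (Fin k) ℝ)
    (S : Matrix (Fin m) (Fin m) ℝ)
    (hfact : (σ.permMatrix ℝ)ᵀ * A * σ.permMatrix ℝ =
      L * Lᵀ + (Matrix.reindex finSumFinEquiv finSumFinEquiv) (Matrix.fromBlocks 0 0 0 S)) :
    specNorm ((σ.permMatrix ℝ)ᵀ * A * σ.permMatrix ℝ - L * Lᵀ) = specNorm S ∧
    eigDesc hA.isHermitian ⟨k, by omega⟩ ≤ specNorm S := by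
  have : Nonempty (Fin m) := ⟨⟨0, hm⟩⟩
  have hP : σ.permMatrix ℝ * (σ.permMatrix ℝ)ᵀ = 1 := by
    rw [transpose_permMatrix, ← permMatrix_mul, inv_mul_cancel, permMatrix_one]
  have hB : ((σ.permMatrix ℝ)ᵀ * A * σ.permMatrix ℝ).IsHermitian := by
    simpa only [conjTranspose_eq_transpose_of_trivial]
      using isHermitian_conjTranspose_mul_mul (σ.permMatrix ℝ) hA.isHermitian
  refine ⟨?_, ?_⟩
  · rw [hfact, add_sub_cancel_left]
    exact specNorm_reindex_fromBlocks_zero _ S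
  · rw [eigDesc_eq_of_charpoly_eq hA.isHermitian hB (charpoly_mul_mul_of_mul_eq_one hP A).symm]
    exact eigDesc_le_specNorm_of_eq_mul_transpose_add hm hB L S hfact
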